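/- Under assumptions: g convex and L-Lipschitz (|g(x) − g(y)| ≤ L‖x − y‖ for all x, y), M symmetric with M − αAᵀA positive semidefinite, and existence of a primal solution x⋆ with dual certificate u⋆ — the NCS iterates satisfy, for every k ≥ 0, g(Ax^{k+1} − b) − g(Ax⋆ − b) ≤ (1/(α√(k+1))) · ( ‖u⁰ − u⋆ − αA(x⁰ − x⋆)‖ + ‖u⋆‖ + L + ‖x⁰ − x⋆‖_{αM − α²AᵀA} )². -/

import Mathlib

/-!
NCS is the proximal point method for the saddle-point problem of `min g(Ax - b)` in the metric
`H = [[M, -Aᵀ], [-A, α⁻¹ I]]`, which is positive semidefinite because `M - αAᵀA` is; writing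
`M - αAᵀA = BᵀB` turns `H` into the pull-back of a Euclidean norm along `ncsEmbed`. The
condition `M - αAᵀA ⪰ 0` also forces `ker M ⊆ ker A`, so the pseudoinverse step gives
`M(xᵏ - xᵏ⁺¹) = Aᵀuᵏ`, while the prox step makes `uᵏ⁺¹` a subgradient of `g` at a point
`Yᵏ = Axᵏ⁺¹ - b + Eᵏ`. Monotonicity of `∂g` then yields, for the embedded iterates `wᵏ`,
Fejér monotonicity `⟪wᵏ - wᵏ⁺¹, wᵏ⁺¹ - w⋆⟫ ≥ 0` and nonincreasing steps `‖wᵏ - wᵏ⁺¹‖`; as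
the squared steps sum to at most `‖w⁰ - w⋆‖²`, we get `√(k+1) ‖wᵏ - wᵏ⁺¹‖ ≤ ‖w⁰ - w⋆‖`.
Finally, Lipschitz continuity and the subgradient inequality at `Yᵏ` bound the gap at
`Axᵏ⁺¹ - b` by `(L + ‖u⋆‖) ‖Eᵏ‖ + ‖wᵏ - wᵏ⁺¹‖ ‖wᵏ⁺¹ - w⋆‖`, with `√α ‖Eᵏ‖ ≤ ‖wᵏ - wᵏ⁺¹‖`.
-/

open Matrix

-- Moore–Penrose pseudoinverse, characterized by the four Penrose conditions
-- (which determine it uniquely when a solution exists).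
open Classical in
noncomputable def mpInv {k l : ℕ} (A : Matrix (Fin k) (Fin l) ℝ) : Matrix (Fin l) (Fin k) ℝ :=
  if h : ∃ X : Matrix (Fin l) (Fin k) ℝ,
      A * X * A = A ∧ X * A * X = X ∧ (A * X)ᵀ = A * X ∧ (X * A)ᵀ = X * A
  then h.choose else 0

/-- Euclidean norm of a vector. -/
noncomputable def vnorm {m : ℕ} (v : Fin m → ℝ) : ℝ := Real.sqrt (v ⬝ᵥ v)

/-- Seminorm `‖x‖_P = √(xᵀ P x)` induced by a positive semidefinite matrix `P`. -/
noncomputable def pnorm {n : ℕ} (P : Matrix (Fin n) (Fin n) ℝ) (x : Fin n → ℝ) : ℝ :=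
  Real.sqrt (x ⬝ᵥ (P *ᵥ x))

-- `ProxRel g α z u'` says that `u' = prox_{αg*}(z)`, i.e. that
-- `α⁻¹ (z - u')` is a minimizer of `x ↦ g(x) + (α/2)‖x - z/α‖²`
-- (by Moreau's identity `prox_{αg*}(z) = z - α argmin_x {g(x) + (α/2)‖x - z/α‖²}`).
def ProxRel {m : ℕ} (g : (Fin m → ℝ) → ℝ) (α : ℝ) (z u' : Fin m → ℝ) : Prop :=
  IsMinOn (fun y : Fin m → ℝ => g y + (α / 2) * ((y - α⁻¹ • z) ⬝ᵥ (y - α⁻¹ • z)))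
    Set.univ (α⁻¹ • (z - u'))

open Set Filter Topology Finset
open scoped InnerProductSpace

lemma le_of_forall_mem_Ioc_le_add_mul {a b c : ℝ} (h : ∀ t ∈ Ioc (0 : ℝ) 1, a ≤ b + t * c) :
    a ≤ b := by
  have hlim : Tendsto (fun t : ℝ => b + t * c) (𝓝[>] 0) (𝓝 b) := by
    have hcont : Continuous fun t : ℝ => b + t * c := by fun_prop
    exact (hcont.tendsto' 0 b (by simp)).mono_left nhdsWithin_le_nhds
  exact ge_of_tendsto hlim (eventually_of_mem (Ioc_mem_nhdsGT one_pos) h)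

lemma vnorm_eq_norm_toLp {m : ℕ} (v : Fin m → ℝ) : vnorm v = ‖WithLp.toLp 2 v‖ := by
  rw [norm_eq_sqrt_real_inner, EuclideanSpace.inner_toLp_toLp, star_trivial, vnorm]

lemma vnorm_nonneg {m : ℕ} (v : Fin m → ℝ) : 0 ≤ vnorm v := Real.sqrt_nonneg _

lemma vnorm_sq {m : ℕ} (v : Fin m → ℝ) : vnorm v ^ 2 = v ⬝ᵥ v :=
  Real.sq_sqrt (by simpa using dotProduct_star_self_nonneg v)

lemma vnorm_neg {m : ℕ} (v : Fin m → ℝ) : vnorm (-v) = vnorm v := by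
  simp only [vnorm_eq_norm_toLp, WithLp.toLp_neg, norm_neg]

lemma dotProduct_le_vnorm_mul_vnorm {m : ℕ} (v w : Fin m → ℝ) : v ⬝ᵥ w ≤ vnorm v * vnorm w := by
  simpa only [vnorm_eq_norm_toLp, EuclideanSpace.inner_toLp_toLp, star_trivial, dotProduct_comm]
    using real_inner_le_norm (WithLp.toLp 2 v) (WithLp.toLp 2 w)

lemma dotProduct_mulVec_eq_zero_of_transpose_mulVec_eq_zero {ι κ R : Type*} [Fintype ι]
    [Fintype κ] [CommSemiring R] {A : Matrix ι κ R} {v : ι → R} (hv : Aᵀ *ᵥ v = 0) (p : κ → R) :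
    v ⬝ᵥ (A *ᵥ p) = 0 := by
  rw [dotProduct_mulVec, ← mulVec_transpose, hv, zero_dotProduct]

section Subgradient

variable {ι : Type*} [Fintype ι] {g : (ι → ℝ) → ℝ}

def IsSubgradient (g : (ι → ℝ) → ℝ) (v y : ι → ℝ) : Prop :=
  ∀ y', g y + v ⬝ᵥ (y' - y) ≤ g y'

lemma IsSubgradient.dotProduct_sub_nonneg {v v' y y' : ι → ℝ} (h : IsSubgradient g v y)
    (h' : IsSubgradient g v' y') : 0 ≤ (v - v') ⬝ᵥ (y - y') := by
  have h₁ := h y'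
  have h₂ := h' y
  rw [← neg_sub y y', dotProduct_neg] at h₁
  rw [sub_dotProduct]
  linarith

lemma isSubgradient_of_isMinOn_add_sq (hg : ConvexOn ℝ univ g) {a : ℝ} {c y : ι → ℝ}
    (h : IsMinOn (fun z => g z + a / 2 * ((z - c) ⬝ᵥ (z - c))) univ y) :
    IsSubgradient g (a • (c - y)) y := by
  intro y'
  set d := y' - y
  refine le_of_forall_mem_Ioc_le_add_mul (c := a / 2 * (d ⬝ᵥ d)) fun t ⟨ht₀, ht₁⟩ => ?_
  have hmin := isMinOn_iff.mp h (y + t • d) (mem_univ _)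
  have hconv : g (y + t • d) ≤ (1 - t) * g y + t * g y' := by
    have := hg.2 (mem_univ y) (mem_univ y') (sub_nonneg.mpr ht₁) ht₀.le (by ring)
    rwa [show (1 - t) • y + t • y' = y + t • d by simp only [d, smul_sub, sub_smul, one_smul]; abel]
      at this
  have hquad : (y + t • d - c) ⬝ᵥ (y + t • d - c)
      = (y - c) ⬝ᵥ (y - c) - 2 * t * ((c - y) ⬝ᵥ d) + t ^ 2 * (d ⬝ᵥ d) := by
    rw [show y + t • d - c = (y - c) + t • d by abel, ← neg_sub c y]
    simp only [dotProduct_add, add_dotProduct, dotProduct_smul, smul_dotProduct, neg_dotProduct,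
      dotProduct_neg, smul_eq_mul, dotProduct_comm d]
    ring
  simp only [hquad] at hmin
  rw [smul_dotProduct, smul_eq_mul]
  -- `t (g y' - g y) ≥ t a ⟪c - y, d⟫ - t² (a/2) ‖d‖²`, divided by `t > 0`
  nlinarith

end Subgradient

lemma ProxRel.isSubgradient {m : ℕ} {g : (Fin m → ℝ) → ℝ} (hg : ConvexOn ℝ univ g) {α : ℝ}
    (hα : α ≠ 0) {z u' : Fin m → ℝ} (h : ProxRel g α z u') :
    IsSubgradient g u' (α⁻¹ • (z - u')) := by
  have := isSubgradient_of_isMinOn_add_sq hg h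
  rwa [← smul_sub, sub_sub_cancel, smul_smul, mul_inv_cancel₀ hα, one_smul] at this

section PseudoInverse

variable {k : ℕ} {M : Matrix (Fin k) (Fin k) ℝ}

lemma exists_penrose_of_isHermitian (hM : M.IsHermitian) :
    ∃ X : Matrix (Fin k) (Fin k) ℝ,
      M * X * M = M ∧ X * M * X = X ∧ (M * X)ᵀ = M * X ∧ (X * M)ᵀ = X * M := by
  set φ := Unitary.conjStarAlgAut ℝ (Matrix (Fin k) (Fin k) ℝ) hM.eigenvectorUnitary
  set d : Fin k → ℝ := RCLike.ofReal ∘ hM.eigenvalues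
  have hspec : M = φ (diagonal d) := hM.spectral_theorem
  have hsymm : ∀ e : Fin k → ℝ, (φ (diagonal e))ᵀ = φ (diagonal e) := fun e => by
    rw [← conjTranspose_eq_transpose_of_trivial, ← star_eq_conjTranspose, ← map_star,
      star_eq_conjTranspose, diagonal_conjTranspose, star_trivial]
  have hinv (a : ℝ) : a⁻¹ * a * a⁻¹ = a⁻¹ := by simpa using mul_inv_mul_cancel a⁻¹
  refine ⟨φ (diagonal fun i => (d i)⁻¹), ?_, ?_, ?_, ?_⟩ <;>
    simp [hspec, ← map_mul, hsymm, hinv]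

lemma mpInv_spec (hM : M.IsHermitian) :
    M * mpInv M * M = M ∧ (M * mpInv M)ᵀ = M * mpInv M := by
  have h := exists_penrose_of_isHermitian hM
  rw [mpInv, dif_pos h]
  exact ⟨h.choose_spec.1, h.choose_spec.2.2.1⟩

lemma mulVec_mpInv_mulVec_of_orthogonal_ker (hM : Mᵀ = M) {w : Fin k → ℝ}
    (hw : ∀ q, M *ᵥ q = 0 → w ⬝ᵥ q = 0) : M *ᵥ (mpInv M *ᵥ w) = w := by
  obtain ⟨h₁, h₂⟩ :=
    mpInv_spec (M := M) (by rwa [IsHermitian, conjTranspose_eq_transpose_of_trivial])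
  set P := M * mpInv M
  have hMP : M * P = M := by
    simpa only [transpose_mul, h₂, hM] using congrArg transpose h₁
  set q := w - P *ᵥ w
  have hMq : M *ᵥ q = 0 := by rw [mulVec_sub, mulVec_mulVec, hMP, sub_self]
  have hPq : P *ᵥ q = 0 := by rw [← h₂, transpose_mul, ← mulVec_mulVec, hM, hMq, mulVec_zero]
  have hq : q ⬝ᵥ q = 0 := by
    calc q ⬝ᵥ q = w ⬝ᵥ q - q ⬝ᵥ (P *ᵥ w) := by rw [sub_dotProduct, dotProduct_comm q]
      _ = 0 := by
        rw [hw q hMq, dotProduct_mulVec, ← mulVec_transpose, h₂, hPq, zero_dotProduct, sub_zero]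
  rw [mulVec_mulVec]
  exact (sub_eq_zero.mp (dotProduct_self_eq_zero.mp hq)).symm

lemma mulVec_eq_zero_of_posSemidef_sub {m : ℕ} {A : Matrix (Fin m) (Fin k) ℝ} {α : ℝ}
    (hα : 0 < α) (h : (M - α • (Aᵀ * A)).PosSemidef) {q : Fin k → ℝ} (hq : M *ᵥ q = 0) :
    A *ᵥ q = 0 := by
  have hnonneg := h.dotProduct_mulVec_nonneg q
  rw [star_trivial, sub_mulVec, smul_mulVec, ← mulVec_mulVec, dotProduct_sub, hq, dotProduct_zero,
    dotProduct_smul, dotProduct_mulVec, vecMul_transpose, dotProduct_comm, smul_eq_mul] at hnonneg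
  have hAq : (A *ᵥ q) ⬝ᵥ (A *ᵥ q) ≤ 0 := by nlinarith
  exact dotProduct_self_eq_zero.mp
    (le_antisymm hAq (by simpa using dotProduct_star_self_nonneg (A *ᵥ q)))

lemma mulVec_mpInv_mulVec_transpose {m : ℕ} {A : Matrix (Fin m) (Fin k) ℝ} {α : ℝ} (hM : Mᵀ = M)
    (hα : 0 < α) (h : (M - α • (Aᵀ * A)).PosSemidef) (v : Fin m → ℝ) :
    M *ᵥ (mpInv M *ᵥ (Aᵀ *ᵥ v)) = Aᵀ *ᵥ v :=
  mulVec_mpInv_mulVec_of_orthogonal_ker hM fun q hq => by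
    rw [mulVec_transpose, ← dotProduct_mulVec, mulVec_eq_zero_of_posSemidef_sub hα h hq,
      dotProduct_zero]

end PseudoInverse

open scoped MatrixOrder in
lemma Matrix.PosSemidef.exists_transpose_mul_self_eq {ι : Type*} [Fintype ι] [DecidableEq ι]
    {P : Matrix ι ι ℝ} (hP : P.PosSemidef) : ∃ B : Matrix ι ι ℝ, Bᵀ * B = P := by
  obtain ⟨B, hB⟩ := CStarAlgebra.nonneg_iff_eq_star_mul_self.mp hP.nonneg
  exact ⟨B, by rw [hB, star_eq_conjTranspose, conjTranspose_eq_transpose_of_trivial]⟩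

section ProximalPoint

variable {E : Type*} [NormedAddCommGroup E] [InnerProductSpace ℝ E]

lemma sq_norm_sub_add_sq_norm_sub_le {a b s : E} (h : 0 ≤ ⟪a - b, b - s⟫_ℝ) :
    ‖b - s‖ ^ 2 + ‖a - b‖ ^ 2 ≤ ‖a - s‖ ^ 2 := by
  have := norm_add_sq_real (a - b) (b - s)
  rw [sub_add_sub_cancel] at this
  linarith

lemma norm_le_of_inner_sub_nonneg {r r' : E} (h : 0 ≤ ⟪r - r', r'⟫_ℝ) : ‖r'‖ ≤ ‖r‖ := by
  rw [inner_sub_left, real_inner_self_eq_norm_sq] at h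
  nlinarith [real_inner_le_norm r r', norm_nonneg r, norm_nonneg r']

variable {w : ℕ → E} {s : E}

lemma sum_sq_norm_sub_succ_add_sq_norm_sub_le (hfejer : ∀ k, 0 ≤ ⟪w k - w (k + 1), w (k + 1) - s⟫_ℝ)
    (k : ℕ) : ∑ j ∈ range k, ‖w j - w (j + 1)‖ ^ 2 + ‖w k - s‖ ^ 2 ≤ ‖w 0 - s‖ ^ 2 := by
  induction k with
  | zero => simp
  | succ k ih =>
    rw [sum_range_succ]
    linarith [sq_norm_sub_add_sq_norm_sub_le (hfejer k)]

lemma norm_sub_le_of_fejer (hfejer : ∀ k, 0 ≤ ⟪w k - w (k + 1), w (k + 1) - s⟫_ℝ) (k : ℕ) :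
    ‖w k - s‖ ≤ ‖w 0 - s‖ := by
  refine le_of_pow_le_pow_left₀ two_ne_zero (norm_nonneg _) ?_
  linarith [sum_sq_norm_sub_succ_add_sq_norm_sub_le hfejer k,
    sum_nonneg fun j (_ : j ∈ range k) => sq_nonneg ‖w j - w (j + 1)‖]

lemma sqrt_succ_mul_norm_sub_succ_le (hfejer : ∀ k, 0 ≤ ⟪w k - w (k + 1), w (k + 1) - s⟫_ℝ)
    (hmono : ∀ k, 0 ≤ ⟪(w k - w (k + 1)) - (w (k + 1) - w (k + 2)), w (k + 1) - w (k + 2)⟫_ℝ)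
    (k : ℕ) : √(k + 1) * ‖w k - w (k + 1)‖ ≤ ‖w 0 - s‖ := by
  have hanti : Antitone fun j => ‖w j - w (j + 1)‖ :=
    antitone_nat_of_succ_le fun j => norm_le_of_inner_sub_nonneg (hmono j)
  have hsum : (k + 1) * ‖w k - w (k + 1)‖ ^ 2 ≤ ∑ j ∈ range (k + 1), ‖w j - w (j + 1)‖ ^ 2 := by
    simpa using card_nsmul_le_sum (range (k + 1)) (fun j => ‖w j - w (j + 1)‖ ^ 2) _
      fun j hj => pow_le_pow_left₀ (norm_nonneg _) (hanti (mem_range_succ_iff.mp hj)) 2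
  refine le_of_pow_le_pow_left₀ two_ne_zero (norm_nonneg _) ?_
  rw [mul_pow, Real.sq_sqrt (by positivity)]
  linarith [sum_sq_norm_sub_succ_add_sq_norm_sub_le hfejer (k + 1), sq_nonneg ‖w (k + 1) - s‖]

end ProximalPoint

section NCSEmbed

variable {m n : ℕ} (A : Matrix (Fin m) (Fin n) ℝ) (B : Matrix (Fin n) (Fin n) ℝ) (α : ℝ)

/-- When `Bᵀ * B = M - α • (Aᵀ * A)`, `‖ncsEmbed A B α p q‖²` is the squared norm of `(p, q)` in
the metric `H = [[M, -Aᵀ], [-A, α⁻¹ I]]`, in which NCS is a proximal point method. -/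
noncomputable def ncsEmbed (p : Fin n → ℝ) (q : Fin m → ℝ) : EuclideanSpace ℝ (Fin m ⊕ Fin n) :=
  WithLp.toLp 2 (Sum.elim ((√α)⁻¹ • (q - α • (A *ᵥ p))) (B *ᵥ p))

lemma ncsEmbed_sub (p p' : Fin n → ℝ) (q q' : Fin m → ℝ) :
    ncsEmbed A B α (p - p') (q - q') = ncsEmbed A B α p q - ncsEmbed A B α p' q' := by
  rw [ncsEmbed, ncsEmbed, ncsEmbed, ← WithLp.toLp_sub, ← Sum.elim_sub_sub, ← smul_sub,
    sub_sub_sub_comm, ← smul_sub, mulVec_sub, mulVec_sub]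

lemma inner_ncsEmbed {α : ℝ} (hα : 0 ≤ α) (p p' : Fin n → ℝ) (q q' : Fin m → ℝ) :
    ⟪ncsEmbed A B α p q, ncsEmbed A B α p' q'⟫_ℝ
      = α⁻¹ * ((q - α • (A *ᵥ p)) ⬝ᵥ (q' - α • (A *ᵥ p'))) + (B *ᵥ p) ⬝ᵥ (B *ᵥ p') := by
  rw [ncsEmbed, ncsEmbed, EuclideanSpace.inner_toLp_toLp, star_trivial, sumElim_dotProduct_sumElim,
    smul_dotProduct, dotProduct_smul, smul_eq_mul, smul_eq_mul, ← mul_assoc, ← mul_inv,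
    Real.mul_self_sqrt hα, dotProduct_comm (B *ᵥ p'), dotProduct_comm (q' - _)]

variable {A B α} {M : Matrix (Fin n) (Fin n) ℝ}

lemma inner_ncsEmbed_of_mulVec_eq (hα : 0 < α) (hB : Bᵀ * B = M - α • (Aᵀ * A))
    {p₀ p : Fin n → ℝ} {q₀ q v : Fin m → ℝ} (hp₀ : M *ᵥ p₀ = Aᵀ *ᵥ v) :
    ⟪ncsEmbed A B α p₀ q₀, ncsEmbed A B α p q⟫_ℝ
      = (v - q₀) ⬝ᵥ (A *ᵥ p) + q ⬝ᵥ (α⁻¹ • q₀ - A *ᵥ p₀) := by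
  have hBB : (B *ᵥ p₀) ⬝ᵥ (B *ᵥ p) = v ⬝ᵥ (A *ᵥ p) - α * ((A *ᵥ p₀) ⬝ᵥ (A *ᵥ p)) := by
    rw [dotProduct_mulVec, ← mulVec_transpose, mulVec_mulVec, hB, sub_mulVec, hp₀, smul_mulVec,
      ← mulVec_mulVec, sub_dotProduct, smul_dotProduct, mulVec_transpose, mulVec_transpose,
      ← dotProduct_mulVec, ← dotProduct_mulVec, smul_eq_mul]
  rw [inner_ncsEmbed A B hα.le, hBB]
  simp only [dotProduct_sub, sub_dotProduct, dotProduct_smul, smul_dotProduct, smul_eq_mul]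
  field_simp
  linear_combination dotProduct_comm q₀ q - α * dotProduct_comm (A *ᵥ p₀) q

lemma sq_norm_ncsEmbed (hα : 0 ≤ α) (p : Fin n → ℝ) (q : Fin m → ℝ) :
    ‖ncsEmbed A B α p q‖ ^ 2 = α⁻¹ * vnorm (q - α • (A *ᵥ p)) ^ 2 + (B *ᵥ p) ⬝ᵥ (B *ᵥ p) := by
  rw [← real_inner_self_eq_norm_sq, inner_ncsEmbed A B hα, vnorm_sq]

lemma sqrt_mul_vnorm_le_norm_ncsEmbed (hα : 0 < α) (p : Fin n → ℝ) (q : Fin m → ℝ) :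
    √α * vnorm (α⁻¹ • q - A *ᵥ p) ≤ ‖ncsEmbed A B α p q‖ := by
  have hq : q - α • (A *ᵥ p) = α • (α⁻¹ • q - A *ᵥ p) := by
    rw [smul_sub, smul_smul, mul_inv_cancel₀ hα.ne', one_smul]
  refine le_of_pow_le_pow_left₀ two_ne_zero (norm_nonneg _) ?_
  rw [mul_pow, Real.sq_sqrt hα.le, sq_norm_ncsEmbed hα.le, hq, vnorm_sq, vnorm_sq, smul_dotProduct,
    dotProduct_smul, smul_eq_mul, smul_eq_mul, inv_mul_cancel_left₀ hα.ne']
  exact le_add_of_nonneg_right (by simpa using dotProduct_star_self_nonneg (B *ᵥ p))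

lemma sqrt_mul_norm_ncsEmbed_le (hα : 0 < α) (hB : Bᵀ * B = M - α • (Aᵀ * A))
    (p : Fin n → ℝ) (q : Fin m → ℝ) :
    √α * ‖ncsEmbed A B α p q‖ ≤ vnorm (q - α • (A *ᵥ p)) + pnorm (α • M - α ^ 2 • (Aᵀ * A)) p := by
  have hBp : 0 ≤ (B *ᵥ p) ⬝ᵥ (B *ᵥ p) := by simpa using dotProduct_star_self_nonneg (B *ᵥ p)
  have hP : α • M - α ^ 2 • (Aᵀ * A) = α • (Bᵀ * B) := by rw [hB, smul_sub, smul_smul, sq]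
  have hpnorm : pnorm (α • M - α ^ 2 • (Aᵀ * A)) p ^ 2 = α * ((B *ᵥ p) ⬝ᵥ (B *ᵥ p)) := by
    rw [pnorm, hP, smul_mulVec, ← mulVec_mulVec, dotProduct_smul, dotProduct_mulVec,
      vecMul_transpose, smul_eq_mul, Real.sq_sqrt (by positivity)]
  have ha : 0 ≤ vnorm (q - α • (A *ᵥ p)) := vnorm_nonneg _
  have hd : 0 ≤ pnorm (α • M - α ^ 2 • (Aᵀ * A)) p := Real.sqrt_nonneg _
  refine le_of_pow_le_pow_left₀ two_ne_zero (add_nonneg ha hd) ?_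
  rw [mul_pow, Real.sq_sqrt hα.le, sq_norm_ncsEmbed hα.le, mul_add, mul_inv_cancel_left₀ hα.ne',
    ← hpnorm]
  nlinarith [mul_nonneg ha hd]

end NCSEmbed

section Iterates

variable {m n : ℕ} (A : Matrix (Fin m) (Fin n) ℝ) (b : Fin m → ℝ) (α : ℝ)
  (x : ℕ → Fin n → ℝ) (u : ℕ → Fin m → ℝ)

noncomputable def ncsErr (k : ℕ) : Fin m → ℝ :=
  α⁻¹ • (u k - u (k + 1)) - A *ᵥ (x k - x (k + 1))

/-- The prox step makes `u (k + 1)` a subgradient of `g` at `ncsPoint k` (see `ProxRel`). -/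
noncomputable def ncsPoint (k : ℕ) : Fin m → ℝ :=
  α⁻¹ • (u k + α • (A *ᵥ ((2 : ℝ) • x (k + 1) - x k) - b) - u (k + 1))

lemma ncsPoint_eq {α : ℝ} (hα : α ≠ 0) (k : ℕ) :
    ncsPoint A b α x u k = A *ᵥ x (k + 1) - b + ncsErr A α x u k := by
  ext i
  simp only [ncsPoint, ncsErr, mulVec_sub, mulVec_smul, Pi.add_apply, Pi.sub_apply, Pi.smul_apply,
    smul_eq_mul]
  field_simp
  ring

variable {A b α x u} {B M : Matrix (Fin n) (Fin n) ℝ}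

lemma inner_ncsEmbed_succ (hα : 0 < α) (hB : Bᵀ * B = M - α • (Aᵀ * A))
    (hstep : ∀ k, M *ᵥ (x k - x (k + 1)) = Aᵀ *ᵥ u k) (k : ℕ) (p : Fin n → ℝ) (q : Fin m → ℝ) :
    ⟪ncsEmbed A B α (x k) (u k) - ncsEmbed A B α (x (k + 1)) (u (k + 1)), ncsEmbed A B α p q⟫_ℝ
      = u (k + 1) ⬝ᵥ (A *ᵥ p) + q ⬝ᵥ ncsErr A α x u k := by
  rw [← ncsEmbed_sub, inner_ncsEmbed_of_mulVec_eq hα hB (hstep k), sub_sub_cancel, ncsErr]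

lemma inner_ncsEmbed_succ_sub (hα : 0 < α) (hB : Bᵀ * B = M - α • (Aᵀ * A))
    (hstep : ∀ k, M *ᵥ (x k - x (k + 1)) = Aᵀ *ᵥ u k) (i j : ℕ) :
    ⟪(ncsEmbed A B α (x i) (u i) - ncsEmbed A B α (x (i + 1)) (u (i + 1)))
        - (ncsEmbed A B α (x j) (u j) - ncsEmbed A B α (x (j + 1)) (u (j + 1))),
      ncsEmbed A B α (x (i + 1)) (u (i + 1)) - ncsEmbed A B α (x (j + 1)) (u (j + 1))⟫_ℝ
      = (u (i + 1) - u (j + 1)) ⬝ᵥ (ncsPoint A b α x u i - ncsPoint A b α x u j) := by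
  rw [inner_sub_left, ← ncsEmbed_sub A B α (x (i + 1)), inner_ncsEmbed_succ hα hB hstep,
    inner_ncsEmbed_succ hα hB hstep, ncsPoint_eq A b x u hα.ne', ncsPoint_eq A b x u hα.ne']
  simp only [mulVec_sub, dotProduct_sub, sub_dotProduct, dotProduct_add]
  ring

lemma inner_ncsEmbed_succ_sub_sol (hα : 0 < α) (hB : Bᵀ * B = M - α • (Aᵀ * A))
    (hstep : ∀ k, M *ᵥ (x k - x (k + 1)) = Aᵀ *ᵥ u k) {xs : Fin n → ℝ} {us : Fin m → ℝ}
    (hus : Aᵀ *ᵥ us = 0) (k : ℕ) :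
    ⟪ncsEmbed A B α (x k) (u k) - ncsEmbed A B α (x (k + 1)) (u (k + 1)),
      ncsEmbed A B α (x (k + 1)) (u (k + 1)) - ncsEmbed A B α xs us⟫_ℝ
      = (u (k + 1) - us) ⬝ᵥ (ncsPoint A b α x u k - (A *ᵥ xs - b)) := by
  have hus' := dotProduct_mulVec_eq_zero_of_transpose_mulVec_eq_zero hus (x (k + 1) - xs)
  rw [← ncsEmbed_sub A B α (x (k + 1)), inner_ncsEmbed_succ hα hB hstep, ncsPoint_eq A b x u hα.ne']
  simp only [mulVec_sub, dotProduct_sub, sub_dotProduct, dotProduct_add] at hus' ⊢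
  linarith

lemma ncs_gap_le (hα : 0 < α) (hB : Bᵀ * B = M - α • (Aᵀ * A))
    (hstep : ∀ k, M *ᵥ (x k - x (k + 1)) = Aᵀ *ᵥ u k) {g : (Fin m → ℝ) → ℝ} {L : ℝ}
    (hLip : ∀ v w : Fin m → ℝ, |g v - g w| ≤ L * vnorm (v - w)) {xs : Fin n → ℝ}
    {us : Fin m → ℝ} (hus : Aᵀ *ᵥ us = 0) {k : ℕ}
    (hk : IsSubgradient g (u (k + 1)) (ncsPoint A b α x u k)) :
    g (A *ᵥ x (k + 1) - b) - g (A *ᵥ xs - b)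
      ≤ (L + vnorm us) * vnorm (ncsErr A α x u k)
        + ‖ncsEmbed A B α (x k) (u k) - ncsEmbed A B α (x (k + 1)) (u (k + 1))‖
          * ‖ncsEmbed A B α (x (k + 1)) (u (k + 1)) - ncsEmbed A B α xs us‖ := by
  have hY := ncsPoint_eq A b x u hα.ne' k
  have hLipk :
      g (A *ᵥ x (k + 1) - b) - g (ncsPoint A b α x u k) ≤ L * vnorm (ncsErr A α x u k) := by
    rw [hY]
    have := hLip (A *ᵥ x (k + 1) - b) (A *ᵥ x (k + 1) - b + ncsErr A α x u k)
    rw [sub_add_cancel_left, vnorm_neg] at this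
    exact (le_abs_self _).trans this
  have hsplit : u (k + 1) ⬝ᵥ (A *ᵥ xs - b - ncsPoint A b α x u k)
      = -(⟪ncsEmbed A B α (x k) (u k) - ncsEmbed A B α (x (k + 1)) (u (k + 1)),
          ncsEmbed A B α (x (k + 1)) (u (k + 1)) - ncsEmbed A B α xs us⟫_ℝ
        + us ⬝ᵥ ncsErr A α x u k) := by
    have hus' := dotProduct_mulVec_eq_zero_of_transpose_mulVec_eq_zero hus (x (k + 1) - xs)
    rw [inner_ncsEmbed_succ_sub_sol hα hB hstep hus, hY]
    simp only [mulVec_sub, dotProduct_sub, sub_dotProduct, dotProduct_add] at hus' ⊢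
    linarith
  linarith [hk (A *ᵥ xs - b), real_inner_le_norm
    (ncsEmbed A B α (x k) (u k) - ncsEmbed A B α (x (k + 1)) (u (k + 1)))
    (ncsEmbed A B α (x (k + 1)) (u (k + 1)) - ncsEmbed A B α xs us),
    dotProduct_le_vnorm_mul_vnorm us (ncsErr A α x u k)]

lemma ncs_gap_mul_le (hα : 0 < α) (hB : Bᵀ * B = M - α • (Aᵀ * A))
    (hstep : ∀ k, M *ᵥ (x k - x (k + 1)) = Aᵀ *ᵥ u k) {g : (Fin m → ℝ) → ℝ}
    (hsubg : ∀ k, IsSubgradient g (u (k + 1)) (ncsPoint A b α x u k)) {L : ℝ} (hL : 0 ≤ L)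
    (hLip : ∀ v w : Fin m → ℝ, |g v - g w| ≤ L * vnorm (v - w)) {xs : Fin n → ℝ}
    {us : Fin m → ℝ} (hus : Aᵀ *ᵥ us = 0) (hsub : IsSubgradient g us (A *ᵥ xs - b)) (k : ℕ) :
    (g (A *ᵥ x (k + 1) - b) - g (A *ᵥ xs - b)) * (α * √(k + 1))
      ≤ (L + vnorm us) * (√α * ‖ncsEmbed A B α (x 0 - xs) (u 0 - us)‖)
        + (√α * ‖ncsEmbed A B α (x 0 - xs) (u 0 - us)‖) ^ 2 := by
  set w : ℕ → EuclideanSpace ℝ (Fin m ⊕ Fin n) := fun j => ncsEmbed A B α (x j) (u j)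
  have hfejer (j : ℕ) : 0 ≤ ⟪w j - w (j + 1), w (j + 1) - ncsEmbed A B α xs us⟫_ℝ := by
    rw [inner_ncsEmbed_succ_sub_sol hα hB hstep hus]
    exact (hsubg j).dotProduct_sub_nonneg hsub
  have hmono (j : ℕ) :
      0 ≤ ⟪(w j - w (j + 1)) - (w (j + 1) - w (j + 2)), w (j + 1) - w (j + 2)⟫_ℝ := by
    rw [inner_ncsEmbed_succ_sub hα hB hstep]
    exact (hsubg j).dotProduct_sub_nonneg (hsubg (j + 1))
  have hgap := ncs_gap_le (xs := xs) hα hB hstep hLip hus (hsubg k)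
  have he : √α * vnorm (ncsErr A α x u k) ≤ ‖w k - w (k + 1)‖ := by
    have := sqrt_mul_vnorm_le_norm_ncsEmbed (A := A) (B := B) hα (x k - x (k + 1)) (u k - u (k + 1))
    rwa [ncsEmbed_sub] at this
  have hρ := sqrt_succ_mul_norm_sub_succ_le hfejer hmono k
  have hσ := norm_sub_le_of_fejer hfejer (k + 1)
  rw [ncsEmbed_sub]
  set c := L + vnorm us
  set e := vnorm (ncsErr A α x u k)
  set ρ := ‖w k - w (k + 1)‖
  set σ := ‖w (k + 1) - ncsEmbed A B α xs us‖
  set R := ‖w 0 - ncsEmbed A B α xs us‖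
  have hc : 0 ≤ c := add_nonneg hL (vnorm_nonneg _)
  have hsα : √α ^ 2 = α := Real.sq_sqrt hα.le
  calc (g (A *ᵥ x (k + 1) - b) - g (A *ᵥ xs - b)) * (α * √(k + 1))
      ≤ (c * e + ρ * σ) * (α * √(k + 1)) := mul_le_mul_of_nonneg_right hgap (by positivity)
    _ = c * (√α * (√(k + 1) * (√α * e))) + (√(k + 1) * ρ) * σ * √α ^ 2 := by
      linear_combination -((c * e + ρ * σ) * √(k + 1)) * hsα
    _ ≤ c * (√α * R) + R * R * √α ^ 2 := by
      gcongr
      exact hρ.trans' (by gcongr)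
    _ = c * (√α * R) + (√α * R) ^ 2 := by ring

end Iterates

theorem ncs_rate_general
    {m n : ℕ}
    (A : Matrix (Fin m) (Fin n) ℝ) (b : Fin m → ℝ)
    (α : ℝ) (hα : 0 < α)
    (g : (Fin m → ℝ) → ℝ) (hg : ConvexOn ℝ Set.univ g)
    (L : ℝ) (hLip : ∀ v w : Fin m → ℝ, |g v - g w| ≤ L * vnorm (v - w))
    (M : Matrix (Fin n) (Fin n) ℝ) (hMsymm : Mᵀ = M)
    (hMpsd : (M - α • (Aᵀ * A)).PosSemidef)
    -- NCS iterates: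
    (x : ℕ → Fin n → ℝ) (u : ℕ → Fin m → ℝ)
    (hx : ∀ k, x (k + 1) = x k - mpInv M *ᵥ (Aᵀ *ᵥ u k))
    (hu : ∀ k, ProxRel g α
      (u k + α • (A *ᵥ ((2 : ℝ) • x (k + 1) - x k) - b)) (u (k + 1)))
    -- a primal solution x⋆ together with a dual certificate u⋆:
    (xs : Fin n → ℝ) (us : Fin m → ℝ)
    (hus : Aᵀ *ᵥ us = 0)
    (hsub : ∀ y, g (A *ᵥ xs - b) + us ⬝ᵥ (y - (A *ᵥ xs - b)) ≤ g y) :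
    ∀ k : ℕ,
      g (A *ᵥ x (k + 1) - b) - g (A *ᵥ xs - b) ≤
        (1 / (α * Real.sqrt (k + 1))) *
          (vnorm (u 0 - us - α • (A *ᵥ (x 0 - xs))) + vnorm us + L +
            pnorm (α • M - α ^ 2 • (Aᵀ * A)) (x 0 - xs)) ^ 2 := by
  intro k
  rcases lt_or_ge L 0 with hL | hL
  · calc _ ≤ L * vnorm (A *ᵥ x (k + 1) - b - (A *ᵥ xs - b)) := (le_abs_self _).trans (hLip _ _)
      _ ≤ 0 := mul_nonpos_of_nonpos_of_nonneg hL.le (vnorm_nonneg _)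
      _ ≤ _ := by positivity
  obtain ⟨B, hB⟩ := hMpsd.exists_transpose_mul_self_eq
  have hstep (j : ℕ) : M *ᵥ (x j - x (j + 1)) = Aᵀ *ᵥ u j := by
    rw [hx j, sub_sub_cancel]
    exact mulVec_mpInv_mulVec_transpose hMsymm hα hMpsd (u j)
  have hsubg (j : ℕ) : IsSubgradient g (u (j + 1)) (ncsPoint A b α x u j) :=
    (hu j).isSubgradient hg hα.ne'
  set a := vnorm (u 0 - us - α • (A *ᵥ (x 0 - xs)))
  set d := pnorm (α • M - α ^ 2 • (Aᵀ * A)) (x 0 - xs)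
  set R := ‖ncsEmbed A B α (x 0 - xs) (u 0 - us)‖
  have hR : √α * R ≤ a + d := sqrt_mul_norm_ncsEmbed_le hα hB (x 0 - xs) (u 0 - us)
  have hc : 0 ≤ L + vnorm us := add_nonneg hL (vnorm_nonneg _)
  have had : 0 ≤ a + d := add_nonneg (vnorm_nonneg _) (Real.sqrt_nonneg _)
  rw [one_div, ← div_eq_inv_mul, le_div_iff₀ (by positivity)]
  calc _ ≤ (L + vnorm us) * (√α * R) + (√α * R) ^ 2 :=
        ncs_gap_mul_le hα hB hstep hsubg hL hLip hus hsub k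
    _ ≤ (L + vnorm us) * (a + d) + (a + d) ^ 2 := by gcongr
    _ ≤ (a + vnorm us + L + d) ^ 2 := by nlinarith [mul_nonneg hc had]

theorem ncs_rate
    {m n : ℕ}
    (A : Matrix (Fin m) (Fin n) ℝ) (b : Fin m → ℝ)
    (α : ℝ) (hα : 0 < α)
    (g : (Fin m → ℝ) → ℝ) (hg : ConvexOn ℝ Set.univ g)
    (L : ℝ) (hLip : ∀ v w : Fin m → ℝ, |g v - g w| ≤ L * vnorm (v - w))
    (M : Matrix (Fin n) (Fin n) ℝ) (hMsymm : Mᵀ = M)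
    (hMpsd : (M - α • (Aᵀ * A)).PosSemidef)
    -- NCS iterates:
    (x : ℕ → Fin n → ℝ) (u : ℕ → Fin m → ℝ)
    (hx : ∀ k, x (k + 1) = x k - mpInv M *ᵥ (Aᵀ *ᵥ u k))
    (hu : ∀ k, ProxRel g α
      (u k + α • (A *ᵥ ((2 : ℝ) • x (k + 1) - x k) - b)) (u (k + 1)))
    -- a primal solution x⋆ together with a dual certificate u⋆:
    (xs : Fin n → ℝ) (us : Fin m → ℝ)
    (hxs : ∀ y, g (A *ᵥ xs - b) ≤ g (A *ᵥ y - b))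
    (hus : Aᵀ *ᵥ us = 0)
    (hsub : ∀ y, g (A *ᵥ xs - b) + us ⬝ᵥ (y - (A *ᵥ xs - b)) ≤ g y) :
    ∀ k : ℕ,
      g (A *ᵥ x (k + 1) - b) - g (A *ᵥ xs - b) ≤
        (1 / (α * Real.sqrt (k + 1))) *
          (vnorm (u 0 - us - α • (A *ᵥ (x 0 - xs))) + vnorm us + L +
            pnorm (α • M - α ^ 2 • (Aᵀ * A)) (x 0 - xs)) ^ 2 :=
  ncs_rate_general A b α hα g hg L hLip M hMsymm hMpsd x u hx hu xs us hus hsub
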